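/- Let G be a connected simple graph of order n with diam(G) = 2 and β(G) = n − 3, with twin graph G*, and let v be a vertex of G such that Γ_2^*(v^*) ≠ ∅ and Γ_1(v) is homogeneous. If Γ_2(v) is homogeneous and |R_1^*(v^*)| = 2, then |Γ_2^*(v^*)| ≤ 2. -/

import Mathlib

/-!
Every class of `Γ₂*(v*)` is adjacent in `G*` to one of the two classes `X, Y` forming
`R₁*(v*)`. Two classes of `Γ₂*(v*)` with the same neighbours among `X, Y` are twins, hence
equal: their representatives see `Γ₁(v)` only through `X ∪ Y`, and see the rest of `Γ₂(v)`
(diameter 2) alike because `Γ₂(v)` is homogeneous. So if `|Γ₂*(v*)| ≥ 3`, there are `a, b, c`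
in `Γ₂(v)` adjacent to `X` only, to `Y` only and to both. For `x ∈ X`, `y ∈ Y` the complement
of `{v, x, y, c}` then resolves `G`: `a` and `b` separate every pair except `v, c`, which are
separated by any vertex witnessing that they are not twins. Hence `β(G) ≤ n - 4`.
-/

namespace PaperMetricDim

open SimpleGraph

variable {V : Type*}

/-- A set `W` of vertices resolves the graph `G`: any two distinct vertices have
different distance to some vertex of `W`. -/
def Resolves (G : SimpleGraph V) (W : Set V) : Prop :=
  ∀ u v : V, u ≠ v → ∃ w ∈ W, G.dist u w ≠ G.dist v w

/-- The metric dimension of `G`: the minimum cardinality of a resolving set. -/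
noncomputable def metricDim (G : SimpleGraph V) : ℕ :=
  sInf {k : ℕ | ∃ W : Set V, Resolves G W ∧ W.ncard = k}

/-- `G` is connected and has diameter exactly `d`. -/
def diamEq (G : SimpleGraph V) (d : ℕ) : Prop :=
  G.Connected ∧ (∀ u v : V, G.dist u v ≤ d) ∧ ∃ u v : V, G.dist u v = d

/-- A set of vertices is homogeneous if it induces a complete or an empty subgraph. -/
def Homogeneous (G : SimpleGraph V) (S : Set V) : Prop :=
  (∀ a ∈ S, ∀ b ∈ S, a ≠ b → G.Adj a b) ∨ (∀ a ∈ S, ∀ b ∈ S, ¬ G.Adj a b)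

/-- Two distinct vertices are twins: they have the same neighbours apart from
each other. -/
def Twins (G : SimpleGraph V) (u v : V) : Prop :=
  u ≠ v ∧ G.neighborSet u \ {v} = G.neighborSet v \ {u}

/-- The twin equivalence relation: equal or twins. -/
def twinRel (G : SimpleGraph V) (u v : V) : Prop := u = v ∨ Twins G u v

/-- The twin class of a vertex. -/
def twinClass (G : SimpleGraph V) (v : V) : Set V := {u : V | twinRel G v u}

/-- The vertices of the twin graph: twin equivalence classes. -/
def TwinVertex (G : SimpleGraph V) : Type _ := {S : Set V // ∃ v : V, S = twinClass G v}

/-- The twin graph `G*` of `G`: twin classes, two distinct classes being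
adjacent iff (some, equivalently all) representatives are adjacent in `G`. -/
def twinGraph (G : SimpleGraph V) : SimpleGraph (TwinVertex G) where
  Adj A B := A ≠ B ∧ ∃ a ∈ A.1, ∃ b ∈ B.1, G.Adj a b
  symm := ⟨by
    rintro A B ⟨hne, a, ha, b, hb, hab⟩
    exact ⟨hne.symm, b, hb, a, ha, hab.symm⟩⟩
  loopless := ⟨by rintro A ⟨hne, -⟩; exact hne rfl⟩

/-- The twin class of `v`, as a vertex of the twin graph. -/
def cls (G : SimpleGraph V) (v : V) : TwinVertex G := ⟨twinClass G v, v, rfl⟩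

/-- A twin-graph vertex of type (1): a singleton class. -/
def typeOne (G : SimpleGraph V) (A : TwinVertex G) : Prop := ∃ v : V, A.1 = {v}

/-- A twin-graph vertex of type (K): a class with at least two vertices inducing
a complete subgraph. -/
def typeK (G : SimpleGraph V) (A : TwinVertex G) : Prop :=
  A.1.Nontrivial ∧ ∀ a ∈ A.1, ∀ b ∈ A.1, a ≠ b → G.Adj a b

/-- A twin-graph vertex of type (N): a class with at least two vertices inducing
an empty subgraph. -/
def typeN (G : SimpleGraph V) (A : TwinVertex G) : Prop :=
  A.1.Nontrivial ∧ ∀ a ∈ A.1, ∀ b ∈ A.1, ¬ G.Adj a b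

/-- Type (1K): type (1) or type (K). -/
def type1K (G : SimpleGraph V) (A : TwinVertex G) : Prop := typeOne G A ∨ typeK G A

/-- Type (1N): type (1) or type (N). -/
def type1N (G : SimpleGraph V) (A : TwinVertex G) : Prop := typeOne G A ∨ typeN G A

/-- Type (KN): type (K) or type (N). -/
def typeKN (G : SimpleGraph V) (A : TwinVertex G) : Prop := typeK G A ∨ typeN G A

/-- `Γ_i(v)`: the set of vertices at distance `i` from `v`. -/
def Gamma (G : SimpleGraph V) (i : ℕ) (v : V) : Set V := {u : V | G.dist u v = i}

/-- `Γ_i^*(v^*)`: the set of twin-graph vertices at distance `i` from `v^*`. -/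
def GammaStar (G : SimpleGraph V) (i : ℕ) (v : V) : Set (TwinVertex G) :=
  {A : TwinVertex G | (twinGraph G).dist A (cls G v) = i}

/-- `R_1(v)`: neighbours of `v` having a neighbour at distance 2 from `v`. -/
def R1 (G : SimpleGraph V) (v : V) : Set V :=
  {x ∈ Gamma G 1 v | ∃ y ∈ Gamma G 2 v, G.Adj x y}

/-- `R_2(v) = Γ_1(v) \ R_1(v)`. -/
def R2 (G : SimpleGraph V) (v : V) : Set V := Gamma G 1 v \ R1 G v

/-- `R_1^*(v^*)`: twin-graph neighbours of `v^*` having a neighbour in `Γ_2^*(v^*)`. -/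
def R1Star (G : SimpleGraph V) (v : V) : Set (TwinVertex G) :=
  {A ∈ GammaStar G 1 v | ∃ B ∈ GammaStar G 2 v, (twinGraph G).Adj A B}

/-- `R_2^*(v^*) = Γ_1^*(v^*) \ R_1^*(v^*)`. -/
def R2Star (G : SimpleGraph V) (v : V) : Set (TwinVertex G) :=
  GammaStar G 1 v \ R1Star G v

/-- `M_1(x) = Γ_1(v) ∩ Γ_1(x)` (for `x ∈ Γ_1(v)`). -/
def M1 (G : SimpleGraph V) (v x : V) : Set V := Gamma G 1 v ∩ Gamma G 1 x

/-- `M_2(x) = Γ_1(v) ∩ Γ_2(x)` (for `x ∈ Γ_1(v)`). -/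
def M2 (G : SimpleGraph V) (v x : V) : Set V := Gamma G 1 v ∩ Gamma G 2 x

/-- Structure `G_1`: the twin graph is `K_3` and has at most one vertex of type (1K). -/
def structG1 (G : SimpleGraph V) : Prop :=
  ∃ a b c : TwinVertex G, a ≠ b ∧ a ≠ c ∧ b ≠ c ∧
    (∀ X : TwinVertex G, X = a ∨ X = b ∨ X = c) ∧
    (twinGraph G).Adj a b ∧ (twinGraph G).Adj a c ∧ (twinGraph G).Adj b c ∧
    (∀ X Y : TwinVertex G, type1K G X → type1K G Y → X = Y)

/-- Structure `G_2`: the twin graph is the path `P_3` with (a) centre of type (N)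
and some leaf of type (K), or (b) one leaf of type (K) and the other of type (KN). -/
def structG2 (G : SimpleGraph V) : Prop :=
  ∃ a b c : TwinVertex G, a ≠ b ∧ a ≠ c ∧ b ≠ c ∧
    (∀ X : TwinVertex G, X = a ∨ X = b ∨ X = c) ∧
    (twinGraph G).Adj a b ∧ (twinGraph G).Adj b c ∧ ¬ (twinGraph G).Adj a c ∧
    ((typeN G b ∧ (typeK G a ∨ typeK G c)) ∨
     (typeK G a ∧ typeKN G c) ∨ (typeK G c ∧ typeKN G a))

/-- Structure `G_3`: the twin graph is the paw, the triangle being `u, p, q` with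
the pendant vertex `l` attached to `u`; `p` is of type (N), `q` of type (1K),
`l` of type (1N); and if `q` is of type (K) then neither `l` nor `u` is of type (N). -/
def structG3 (G : SimpleGraph V) : Prop :=
  ∃ u p q l : TwinVertex G,
    u ≠ p ∧ u ≠ q ∧ u ≠ l ∧ p ≠ q ∧ p ≠ l ∧ q ≠ l ∧
    (∀ X : TwinVertex G, X = u ∨ X = p ∨ X = q ∨ X = l) ∧
    (twinGraph G).Adj u p ∧ (twinGraph G).Adj u q ∧ (twinGraph G).Adj p q ∧
    (twinGraph G).Adj u l ∧ ¬ (twinGraph G).Adj p l ∧ ¬ (twinGraph G).Adj q l ∧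
    typeN G p ∧ type1K G q ∧ type1N G l ∧
    (typeK G q → ¬ typeN G l ∧ ¬ typeN G u)

/-- Structure `G_4`: the twin graph is the cycle `C_5` and every vertex is of type (1). -/
def structG4 (G : SimpleGraph V) : Prop :=
  ∃ v0 v1 v2 v3 v4 : TwinVertex G,
    v0 ≠ v1 ∧ v0 ≠ v2 ∧ v0 ≠ v3 ∧ v0 ≠ v4 ∧ v1 ≠ v2 ∧ v1 ≠ v3 ∧ v1 ≠ v4 ∧
    v2 ≠ v3 ∧ v2 ≠ v4 ∧ v3 ≠ v4 ∧
    (∀ X : TwinVertex G, X = v0 ∨ X = v1 ∨ X = v2 ∨ X = v3 ∨ X = v4) ∧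
    (twinGraph G).Adj v0 v1 ∧ (twinGraph G).Adj v1 v2 ∧ (twinGraph G).Adj v2 v3 ∧
    (twinGraph G).Adj v3 v4 ∧ (twinGraph G).Adj v4 v0 ∧
    ¬ (twinGraph G).Adj v0 v2 ∧ ¬ (twinGraph G).Adj v1 v3 ∧ ¬ (twinGraph G).Adj v2 v4 ∧
    ¬ (twinGraph G).Adj v3 v0 ∧ ¬ (twinGraph G).Adj v4 v1 ∧
    (∀ X : TwinVertex G, typeOne G X)

/-- Structure `G_5`: the twin graph is `C_5` with one chord (cycle `v0 v1 v2 v3 v4`,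
chord `v0 v2`); the two adjacent degree-2 vertices `v3, v4` are of type (1), the
other vertices of type (1K). -/
def structG5 (G : SimpleGraph V) : Prop :=
  ∃ v0 v1 v2 v3 v4 : TwinVertex G,
    v0 ≠ v1 ∧ v0 ≠ v2 ∧ v0 ≠ v3 ∧ v0 ≠ v4 ∧ v1 ≠ v2 ∧ v1 ≠ v3 ∧ v1 ≠ v4 ∧
    v2 ≠ v3 ∧ v2 ≠ v4 ∧ v3 ≠ v4 ∧
    (∀ X : TwinVertex G, X = v0 ∨ X = v1 ∨ X = v2 ∨ X = v3 ∨ X = v4) ∧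
    (twinGraph G).Adj v0 v1 ∧ (twinGraph G).Adj v1 v2 ∧ (twinGraph G).Adj v2 v3 ∧
    (twinGraph G).Adj v3 v4 ∧ (twinGraph G).Adj v4 v0 ∧ (twinGraph G).Adj v0 v2 ∧
    ¬ (twinGraph G).Adj v1 v3 ∧ ¬ (twinGraph G).Adj v1 v4 ∧ ¬ (twinGraph G).Adj v2 v4 ∧
    typeOne G v3 ∧ typeOne G v4 ∧ type1K G v0 ∧ type1K G v1 ∧ type1K G v2

/-- Structure `G_6`: the twin graph is `C_5` with two adjacent chords (cycle
`v0 v1 v2 v3 v4`, chords `v0 v2` and `v0 v3`, so `v0` has degree 4); `v0` is of any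
type, the other vertices of type (1K); no two non-adjacent vertices are both of
type (K), and no two adjacent vertices have the different types (K) and (N). -/
def structG6 (G : SimpleGraph V) : Prop :=
  ∃ v0 v1 v2 v3 v4 : TwinVertex G,
    v0 ≠ v1 ∧ v0 ≠ v2 ∧ v0 ≠ v3 ∧ v0 ≠ v4 ∧ v1 ≠ v2 ∧ v1 ≠ v3 ∧ v1 ≠ v4 ∧
    v2 ≠ v3 ∧ v2 ≠ v4 ∧ v3 ≠ v4 ∧
    (∀ X : TwinVertex G, X = v0 ∨ X = v1 ∨ X = v2 ∨ X = v3 ∨ X = v4) ∧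
    (twinGraph G).Adj v0 v1 ∧ (twinGraph G).Adj v1 v2 ∧ (twinGraph G).Adj v2 v3 ∧
    (twinGraph G).Adj v3 v4 ∧ (twinGraph G).Adj v4 v0 ∧ (twinGraph G).Adj v0 v2 ∧
    (twinGraph G).Adj v0 v3 ∧
    ¬ (twinGraph G).Adj v1 v3 ∧ ¬ (twinGraph G).Adj v1 v4 ∧ ¬ (twinGraph G).Adj v2 v4 ∧
    type1K G v1 ∧ type1K G v2 ∧ type1K G v3 ∧ type1K G v4 ∧
    (∀ X Y : TwinVertex G, X ≠ Y → ¬ (twinGraph G).Adj X Y →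
      ¬ (typeK G X ∧ typeK G Y)) ∧
    (∀ X Y : TwinVertex G, (twinGraph G).Adj X Y → ¬ (typeK G X ∧ typeN G Y))

/-- Structure `G_7`: the twin graph is the kite (`K_4` minus an edge, vertices
`a, b` of degree 3 in the kite and `c, d` the non-adjacent pair) with a pendant
vertex `l` attached to the degree-3 vertex `a`; `l` is of type (1), `a` and `b`
are of type (1K), one of `c, d` is of type (K) and the other of type (1). -/
def structG7 (G : SimpleGraph V) : Prop :=
  ∃ a b c d l : TwinVertex G,
    a ≠ b ∧ a ≠ c ∧ a ≠ d ∧ a ≠ l ∧ b ≠ c ∧ b ≠ d ∧ b ≠ l ∧ c ≠ d ∧ c ≠ l ∧ d ≠ l ∧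
    (∀ X : TwinVertex G, X = a ∨ X = b ∨ X = c ∨ X = d ∨ X = l) ∧
    (twinGraph G).Adj a b ∧ (twinGraph G).Adj a c ∧ (twinGraph G).Adj a d ∧
    (twinGraph G).Adj b c ∧ (twinGraph G).Adj b d ∧ (twinGraph G).Adj a l ∧
    ¬ (twinGraph G).Adj c d ∧ ¬ (twinGraph G).Adj b l ∧ ¬ (twinGraph G).Adj c l ∧
    ¬ (twinGraph G).Adj d l ∧
    typeOne G l ∧ type1K G a ∧ type1K G b ∧ typeK G c ∧ typeOne G d

/-- Structure `G_8`: the twin graph is the kite (`K_4` minus an edge, `a, b` of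
degree 3 and `c, d` the non-adjacent degree-2 pair); one degree-2 vertex `c` is of
type (K) and the other `d` of type (1); one degree-3 vertex `a` is of type (N)
and the other `b` of type (1K). -/
def structG8 (G : SimpleGraph V) : Prop :=
  ∃ a b c d : TwinVertex G,
    a ≠ b ∧ a ≠ c ∧ a ≠ d ∧ b ≠ c ∧ b ≠ d ∧ c ≠ d ∧
    (∀ X : TwinVertex G, X = a ∨ X = b ∨ X = c ∨ X = d) ∧
    (twinGraph G).Adj a b ∧ (twinGraph G).Adj a c ∧ (twinGraph G).Adj a d ∧
    (twinGraph G).Adj b c ∧ (twinGraph G).Adj b d ∧ ¬ (twinGraph G).Adj c d ∧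
    typeN G a ∧ type1K G b ∧ typeK G c ∧ typeOne G d

/-- Structure `G_9`: the twin graph is `C_4`, two adjacent vertices of type (K)
and the other two of type (1). -/
def structG9 (G : SimpleGraph V) : Prop :=
  ∃ v0 v1 v2 v3 : TwinVertex G,
    v0 ≠ v1 ∧ v0 ≠ v2 ∧ v0 ≠ v3 ∧ v1 ≠ v2 ∧ v1 ≠ v3 ∧ v2 ≠ v3 ∧
    (∀ X : TwinVertex G, X = v0 ∨ X = v1 ∨ X = v2 ∨ X = v3) ∧
    (twinGraph G).Adj v0 v1 ∧ (twinGraph G).Adj v1 v2 ∧ (twinGraph G).Adj v2 v3 ∧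
    (twinGraph G).Adj v3 v0 ∧ ¬ (twinGraph G).Adj v0 v2 ∧ ¬ (twinGraph G).Adj v1 v3 ∧
    typeK G v0 ∧ typeK G v1 ∧ typeOne G v2 ∧ typeOne G v3

/-- Structure `G_10`: the twin graph is the wheel `C_4 ∨ K_1` (hub `h`, rim
`v0 v1 v2 v3`); two adjacent rim (degree-3) vertices `v0, v1` are of type (K), the
hub is of type (1K), and the other vertices of type (1). -/
def structG10 (G : SimpleGraph V) : Prop :=
  ∃ h v0 v1 v2 v3 : TwinVertex G,
    h ≠ v0 ∧ h ≠ v1 ∧ h ≠ v2 ∧ h ≠ v3 ∧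
    v0 ≠ v1 ∧ v0 ≠ v2 ∧ v0 ≠ v3 ∧ v1 ≠ v2 ∧ v1 ≠ v3 ∧ v2 ≠ v3 ∧
    (∀ X : TwinVertex G, X = h ∨ X = v0 ∨ X = v1 ∨ X = v2 ∨ X = v3) ∧
    (twinGraph G).Adj h v0 ∧ (twinGraph G).Adj h v1 ∧ (twinGraph G).Adj h v2 ∧
    (twinGraph G).Adj h v3 ∧
    (twinGraph G).Adj v0 v1 ∧ (twinGraph G).Adj v1 v2 ∧ (twinGraph G).Adj v2 v3 ∧
    (twinGraph G).Adj v3 v0 ∧ ¬ (twinGraph G).Adj v0 v2 ∧ ¬ (twinGraph G).Adj v1 v3 ∧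
    typeK G v0 ∧ typeK G v1 ∧ type1K G h ∧ typeOne G v2 ∧ typeOne G v3

theorem exists_adj_adj_of_dist_eq_two {G : SimpleGraph V} {u v : V} (h : G.dist u v = 2) :
    ∃ w, G.Adj u w ∧ G.Adj w v := by
  have hedist : G.edist u v = 2 := by
    rw [← (Reachable.of_dist_ne_zero (h ▸ two_ne_zero)).coe_dist_eq_edist, h]
    rfl
  obtain ⟨w, hw⟩ := (edist_eq_two_iff.mp hedist).2.2
  exact ⟨w, hw.1, hw.2.symm⟩

theorem dist_eq_two_of_not_adj {G : SimpleGraph V} (hconn : G.Connected)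
    (hdiam : ∀ u w : V, G.dist u w ≤ 2) {u w : V} (hne : u ≠ w) (hadj : ¬ G.Adj u w) :
    G.dist u w = 2 :=
  le_antisymm (hdiam u w) (hconn.one_lt_dist_of_ne_of_not_adj hne hadj)

theorem Homogeneous.adj_iff_adj {G : SimpleGraph V} {S : Set V} {a b c : V}
    (hS : Homogeneous G S) (hc : c ∈ S) (ha : a ∈ S) (hb : b ∈ S) (hca : c ≠ a) (hcb : c ≠ b) :
    G.Adj c a ↔ G.Adj c b := by
  rcases hS with hS | hS
  · exact iff_of_true (hS c hc a ha hca) (hS c hc b hb hcb)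
  · exact iff_of_false (hS c hc a ha) (hS c hc b hb)

theorem exists_signatures_of_two_lt_ncard {α : Type*} {s : Set α} {P Q : α → Prop}
    (hcover : ∀ A ∈ s, P A ∨ Q A)
    (hinj : ∀ A ∈ s, ∀ B ∈ s, (P A ↔ P B) → (Q A ↔ Q B) → A = B) (hs : 2 < s.ncard) :
    (∃ A ∈ s, P A ∧ ¬ Q A) ∧ (∃ A ∈ s, ¬ P A ∧ Q A) ∧ (∃ A ∈ s, P A ∧ Q A) := by
  classical
  set f : α → Bool × Bool := fun A => (decide (P A), decide (Q A))
  have hmaps : Set.MapsTo f s {(false, false)}ᶜ := fun A hA => by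
    simpa [f, or_iff_not_imp_left] using hcover A hA
  have hinj' : Set.InjOn f s := fun A hA B hB h => by
    simp only [f, Prod.mk.injEq, decide_eq_decide] at h
    exact hinj A hA B hB h.1 h.2
  have himage : f '' s = {(false, false)}ᶜ := by
    refine Set.eq_of_subset_of_ncard_le hmaps.image_subset ?_
    rw [hinj'.ncard_image, Set.ncard_compl, Set.ncard_singleton]
    simp only [Nat.card_eq_fintype_card, Fintype.card_prod, Fintype.card_bool]
    omega
  have hattained (p q : Bool) (hpq : (p, q) ≠ (false, false)) :
      ∃ A ∈ s, decide (P A) = p ∧ decide (Q A) = q := by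
    obtain ⟨A, hA, h⟩ := himage.symm.subset hpq
    exact ⟨A, hA, Prod.mk.injEq .. ▸ h⟩
  refine ⟨?_, ?_, ?_⟩
  · simpa using hattained true false (by decide)
  · simpa using hattained false true (by decide)
  · simpa using hattained true true (by decide)

section Twins

variable {G : SimpleGraph V} {u v w a b : V}

theorem twinRel_iff : twinRel G u v ↔ ∀ w, w ≠ u → w ≠ v → (G.Adj u w ↔ G.Adj v w) := by
  constructor
  · rintro (rfl | ⟨-, h⟩) w hwu hwv
    · rfl
    · simpa [hwu, hwv] using Set.ext_iff.mp h w
  · intro h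
    refine (eq_or_ne u v).imp id fun huv => ⟨huv, Set.ext fun w => ?_⟩
    simp only [Set.mem_sdiff, mem_neighborSet, Set.mem_singleton_iff]
    exact ⟨fun ⟨huw, hwv⟩ => ⟨(h w huw.ne' hwv).mp huw, huw.ne'⟩,
      fun ⟨hvw, hwu⟩ => ⟨(h w hwu hvw.ne').mpr hvw, hvw.ne'⟩⟩

theorem twinRel_symm (h : twinRel G u v) : twinRel G v u :=
  twinRel_iff.mpr fun w hwv hwu => (twinRel_iff.mp h w hwu hwv).symm

theorem twinRel_trans (huv : twinRel G u v) (hvw : twinRel G v w) : twinRel G u w := by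
  rcases eq_or_ne u v with rfl | h₁
  · exact hvw
  rcases eq_or_ne v w with rfl | h₂
  · exact huv
  rcases eq_or_ne u w with rfl | h₃
  · exact Or.inl rfl
  rw [twinRel_iff] at huv hvw ⊢
  intro z hzu hzw
  rcases eq_or_ne z v with rfl | hzv
  · calc G.Adj u z ↔ G.Adj w u := G.adj_comm u z |>.trans (hvw u h₁ h₃)
      _ ↔ G.Adj w z := (G.adj_comm w u).trans ((huv w h₃.symm h₂.symm).trans (G.adj_comm z w))
  · exact (huv z hzu hzv).trans (hvw z hzv hzw)

theorem not_twinRel_of_adj_of_not_adj (huw : G.Adj u w) (hvw : ¬ G.Adj v w) (hwv : w ≠ v) :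
    ¬ twinRel G u v :=
  fun h => hvw ((twinRel_iff.mp h w huw.ne' hwv).mp huw)

theorem exists_eq_cls (A : TwinVertex G) : ∃ a, A = cls G a :=
  let ⟨a, ha⟩ := A.2
  ⟨a, Subtype.ext ha⟩

theorem cls_eq_cls_iff : cls G a = cls G b ↔ twinRel G a b := by
  refine ⟨fun h => ?_, fun h => Subtype.ext (Set.ext fun w => ?_)⟩
  · change b ∈ (cls G a).1
    exact h ▸ Or.inl rfl
  · exact ⟨twinRel_trans (twinRel_symm h), twinRel_trans h⟩

theorem twinGraph_adj_cls_iff :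
    (twinGraph G).Adj (cls G a) (cls G b) ↔ G.Adj a b ∧ ¬ twinRel G a b := by
  refine ⟨fun ⟨hne, a', ha', b', hb', hab'⟩ => ?_, fun ⟨hab, hnt⟩ =>
    ⟨fun h => hnt (cls_eq_cls_iff.mp h), a, Or.inl rfl, b, Or.inl rfl, hab⟩⟩
  have hnt : ¬ twinRel G a b := fun h => hne (cls_eq_cls_iff.mpr h)
  have hab : a ≠ b := fun h => hnt (h ▸ Or.inl rfl)
  have hb'a : b' ≠ a := fun h => hnt (twinRel_symm (h ▸ hb'))
  have hab'' : G.Adj a b' := ((twinRel_iff.mp ha' b' hb'a hab'.ne').mpr hab')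
  exact ⟨((twinRel_iff.mp hb' a hab hb'a.symm).mpr hab''.symm).symm, hnt⟩

end Twins

section Resolving

variable {G : SimpleGraph V}

theorem dist_ne_of_not_adj_iff {u v w : V} (h : ¬ (G.Adj u w ↔ G.Adj v w)) :
    G.dist u w ≠ G.dist v w :=
  fun hd => h (by rw [← dist_eq_one_iff_adj, ← dist_eq_one_iff_adj, hd])

theorem resolves_compl_of_pairwise (hconn : G.Connected) {S : Set V}
    (hS : S.Pairwise fun u v => ∃ w ∉ S, ¬ (G.Adj u w ↔ G.Adj v w)) : Resolves G Sᶜ := by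
  intro u v huv
  by_cases hu : u ∈ S
  · by_cases hv : v ∈ S
    · obtain ⟨w, hw, h⟩ := hS hu hv huv
      exact ⟨w, hw, dist_ne_of_not_adj_iff h⟩
    · exact ⟨v, hv, by rw [dist_self]; exact (hconn.pos_dist_of_ne huv).ne'⟩
  · exact ⟨u, hu, by rw [dist_self]; exact (hconn.pos_dist_of_ne huv.symm).ne⟩

theorem metricDim_add_ncard_le [Fintype V] {S : Set V} (h : Resolves G Sᶜ) :
    metricDim G + S.ncard ≤ Fintype.card V := by
  have hdim : metricDim G ≤ Sᶜ.ncard := Nat.sInf_le ⟨_, h, rfl⟩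
  have hcard := Set.ncard_add_ncard_compl S
  rw [Nat.card_eq_fintype_card] at hcard
  omega

theorem metricDim_add_four_le [Fintype V] (hconn : G.Connected) {v x y a b c : V}
    (hxv : G.Adj x v) (hyv : G.Adj y v) (hav : ¬ G.Adj a v) (hbv : ¬ G.Adj b v)
    (hva : v ≠ a) (hvb : v ≠ b) (hvc : ¬ twinRel G v c)
    (hax : G.Adj a x) (hay : ¬ G.Adj a y) (hbx : ¬ G.Adj b x) (hby : G.Adj b y)
    (hcx : G.Adj c x) (hcy : G.Adj c y) (hcab : G.Adj c a ↔ G.Adj c b) :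
    metricDim G + 4 ≤ Fintype.card V := by
  set S : Set V := {v, x, y, c}
  have hvc' : v ≠ c := fun h => hvc (h ▸ Or.inl rfl)
  have hxy : x ≠ y := fun h => hay (h ▸ hax)
  have ha : a ∉ S := by
    simp only [S, Set.mem_insert_iff, Set.mem_singleton_iff, not_or]
    exact ⟨hva.symm, hax.ne, fun h => hav (h ▸ hyv), fun h => hay (h ▸ hcy)⟩
  have hb : b ∉ S := by
    simp only [S, Set.mem_insert_iff, Set.mem_singleton_iff, not_or]
    exact ⟨hvb.symm, fun h => hbv (h ▸ hxv), hby.ne, fun h => hbx (h ▸ hcx)⟩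
  obtain ⟨z, hzv, hzc, hz⟩ : ∃ z, z ≠ v ∧ z ≠ c ∧ ¬ (G.Adj v z ↔ G.Adj c z) := by
    simpa [twinRel_iff] using hvc
  have hzS : z ∉ S := by
    simp only [S, Set.mem_insert_iff, Set.mem_singleton_iff, not_or]
    exact ⟨hzv, fun h => hz (h ▸ iff_of_true hxv.symm hcx),
      fun h => hz (h ▸ iff_of_true hyv.symm hcy), hzc⟩
  have hS : S.ncard = 4 := by
    simp [S, Set.ncard_insert_of_notMem, hxv.ne', hyv.ne', hvc', hxy, hcx.ne', hcy.ne']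
  have : Std.Symm fun u u' => ∃ w ∉ S, ¬ (G.Adj u w ↔ G.Adj u' w) :=
    ⟨fun u u' ⟨w, hw, h⟩ => ⟨w, hw, fun h' => h h'.symm⟩⟩
  refine hS ▸ metricDim_add_ncard_le (resolves_compl_of_pairwise hconn ?_)
  simp only [S, Set.pairwise_insert_of_symm, Set.pairwise_singleton, true_and,
    Set.forall_mem_insert, Set.mem_singleton_iff, forall_eq]
  refine ⟨⟨fun _ => ?_, fun _ => ⟨a, ha, fun h => hay (h.mp hax.symm).symm⟩, fun _ => ?_⟩,
    fun _ => ⟨a, ha, fun h => hav (h.mpr hax.symm).symm⟩,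
    fun _ => ⟨b, hb, fun h => hbv (h.mpr hby.symm).symm⟩, fun _ => ⟨z, hzS, hz⟩⟩
  · by_cases hca : G.Adj c a
    · exact ⟨a, ha, fun h => hay (h.mpr hca).symm⟩
    · exact ⟨b, hb, fun h => hca (hcab.mpr (h.mp hby.symm))⟩
  · by_cases hca : G.Adj c a
    · exact ⟨b, hb, fun h => hbx (h.mpr (hcab.mp hca)).symm⟩
    · exact ⟨a, ha, fun h => hca (h.mp hax.symm)⟩

end Resolving

section TwinGraphLayers

variable {G : SimpleGraph V} {v a b x z : V}

theorem not_twinRel_of_cls_mem_gammaStar_two (ha : cls G a ∈ GammaStar G 2 v) :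
    ¬ twinRel G a v := by
  intro h
  have hdist : (twinGraph G).dist (cls G a) (cls G v) = 2 := ha
  rw [cls_eq_cls_iff.mpr h, dist_self] at hdist
  exact two_ne_zero hdist.symm

theorem ne_of_cls_mem_gammaStar_two (ha : cls G a ∈ GammaStar G 2 v) : a ≠ v :=
  fun h => not_twinRel_of_cls_mem_gammaStar_two ha (h ▸ Or.inl rfl)

theorem not_adj_of_cls_mem_gammaStar_two (ha : cls G a ∈ GammaStar G 2 v) : ¬ G.Adj a v := by
  intro h
  have hdist : (twinGraph G).dist (cls G a) (cls G v) = 2 := ha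
  rw [dist_eq_one_iff_adj.mpr
    (twinGraph_adj_cls_iff.mpr ⟨h, not_twinRel_of_cls_mem_gammaStar_two ha⟩)] at hdist
  omega

theorem dist_eq_two_of_cls_mem_gammaStar_two (hconn : G.Connected)
    (hdiam : ∀ u w : V, G.dist u w ≤ 2) (ha : cls G a ∈ GammaStar G 2 v) : G.dist a v = 2 :=
  dist_eq_two_of_not_adj hconn hdiam (ne_of_cls_mem_gammaStar_two ha)
    (not_adj_of_cls_mem_gammaStar_two ha)

theorem adj_of_cls_mem_gammaStar_one (hx : cls G x ∈ GammaStar G 1 v) : G.Adj x v :=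
  (twinGraph_adj_cls_iff.mp (dist_eq_one_iff_adj.mp hx)).1

theorem twinGraph_adj_cls_iff_of_gammaStar (ha : cls G a ∈ GammaStar G 2 v)
    (hx : cls G x ∈ GammaStar G 1 v) : (twinGraph G).Adj (cls G a) (cls G x) ↔ G.Adj a x := by
  refine twinGraph_adj_cls_iff.trans (and_iff_left fun h => ?_)
  have hx2 : (twinGraph G).dist (cls G x) (cls G v) = 2 := cls_eq_cls_iff.mpr h ▸ ha
  have hx1 : (twinGraph G).dist (cls G x) (cls G v) = 1 := hx
  omega

theorem exists_mem_R1Star_adj {A : TwinVertex G} (hA : A ∈ GammaStar G 2 v) :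
    ∃ U ∈ R1Star G v, (twinGraph G).Adj A U := by
  obtain ⟨U, hAU, hUv⟩ := exists_adj_adj_of_dist_eq_two hA
  exact ⟨U, ⟨dist_eq_one_iff_adj.mpr hUv, A, hA, hAU.symm⟩, hAU⟩

theorem cls_mem_R1Star_of_adj (ha : cls G a ∈ GammaStar G 2 v) (haz : G.Adj a z)
    (hzv : G.Adj z v) : cls G z ∈ R1Star G v ∧ (twinGraph G).Adj (cls G a) (cls G z) := by
  have hav := not_adj_of_cls_mem_gammaStar_two ha
  have hza : (twinGraph G).Adj (cls G z) (cls G a) := twinGraph_adj_cls_iff.mpr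
    ⟨haz.symm, not_twinRel_of_adj_of_not_adj hzv hav (ne_of_cls_mem_gammaStar_two ha).symm⟩
  have hzv' : (twinGraph G).Adj (cls G z) (cls G v) := twinGraph_adj_cls_iff.mpr
    ⟨hzv, not_twinRel_of_adj_of_not_adj haz.symm (fun h => hav h.symm)
      (ne_of_cls_mem_gammaStar_two ha)⟩
  exact ⟨⟨dist_eq_one_iff_adj.mpr hzv', _, ha, hza⟩, hza.symm⟩

theorem adj_of_adj_of_forall_R1Star_adj (hconn : G.Connected)
    (hdiam : ∀ u w : V, G.dist u w ≤ 2) (hhom2 : Homogeneous G (Gamma G 2 v))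
    (ha : cls G a ∈ GammaStar G 2 v) (hb : cls G b ∈ GammaStar G 2 v)
    (hab : ∀ U ∈ R1Star G v, (twinGraph G).Adj (cls G a) U → (twinGraph G).Adj (cls G b) U)
    (haz : G.Adj a z) (hzb : z ≠ b) : G.Adj b z := by
  rcases eq_or_ne z v with rfl | hzv
  · exact absurd haz (not_adj_of_cls_mem_gammaStar_two ha)
  by_cases hzv' : G.Adj z v
  · obtain ⟨hz, haz'⟩ := cls_mem_R1Star_of_adj ha haz hzv'
    exact (twinGraph_adj_cls_iff.mp (hab _ hz haz')).1
  · have hz2 : z ∈ Gamma G 2 v := dist_eq_two_of_not_adj hconn hdiam hzv hzv'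
    exact ((hhom2.adj_iff_adj hz2 (dist_eq_two_of_cls_mem_gammaStar_two hconn hdiam ha)
      (dist_eq_two_of_cls_mem_gammaStar_two hconn hdiam hb) haz.ne' hzb).mp haz.symm).symm

theorem eq_of_forall_R1Star_adj_iff (hconn : G.Connected)
    (hdiam : ∀ u w : V, G.dist u w ≤ 2) (hhom2 : Homogeneous G (Gamma G 2 v))
    {A B : TwinVertex G} (hA : A ∈ GammaStar G 2 v) (hB : B ∈ GammaStar G 2 v)
    (hAB : ∀ U ∈ R1Star G v, ((twinGraph G).Adj A U ↔ (twinGraph G).Adj B U)) : A = B := by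
  obtain ⟨a, rfl⟩ := exists_eq_cls A
  obtain ⟨b, rfl⟩ := exists_eq_cls B
  refine cls_eq_cls_iff.mpr (twinRel_iff.mpr fun z hza hzb => ⟨fun h => ?_, fun h => ?_⟩)
  · exact adj_of_adj_of_forall_R1Star_adj hconn hdiam hhom2 hA hB
      (fun U hU => (hAB U hU).mp) h hzb
  · exact adj_of_adj_of_forall_R1Star_adj hconn hdiam hhom2 hB hA
      (fun U hU => (hAB U hU).mpr) h hza

end TwinGraphLayers

theorem metricDim_add_four_le_of_gammaStar [Fintype V] {G : SimpleGraph V} {v x y a b c : V}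
    (hconn : G.Connected) (hdiam : ∀ u w : V, G.dist u w ≤ 2)
    (hhom2 : Homogeneous G (Gamma G 2 v))
    (hx : cls G x ∈ GammaStar G 1 v) (hy : cls G y ∈ GammaStar G 1 v)
    (ha : cls G a ∈ GammaStar G 2 v) (hb : cls G b ∈ GammaStar G 2 v)
    (hc : cls G c ∈ GammaStar G 2 v)
    (hax : (twinGraph G).Adj (cls G a) (cls G x)) (hay : ¬ (twinGraph G).Adj (cls G a) (cls G y))
    (hbx : ¬ (twinGraph G).Adj (cls G b) (cls G x)) (hby : (twinGraph G).Adj (cls G b) (cls G y))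
    (hcx : (twinGraph G).Adj (cls G c) (cls G x)) (hcy : (twinGraph G).Adj (cls G c) (cls G y)) :
    metricDim G + 4 ≤ Fintype.card V := by
  rw [twinGraph_adj_cls_iff_of_gammaStar ha hx] at hax
  rw [twinGraph_adj_cls_iff_of_gammaStar ha hy] at hay
  rw [twinGraph_adj_cls_iff_of_gammaStar hb hx] at hbx
  rw [twinGraph_adj_cls_iff_of_gammaStar hb hy] at hby
  rw [twinGraph_adj_cls_iff_of_gammaStar hc hx] at hcx
  rw [twinGraph_adj_cls_iff_of_gammaStar hc hy] at hcy
  have hcab : G.Adj c a ↔ G.Adj c b :=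
    hhom2.adj_iff_adj (dist_eq_two_of_cls_mem_gammaStar_two hconn hdiam hc)
      (dist_eq_two_of_cls_mem_gammaStar_two hconn hdiam ha)
      (dist_eq_two_of_cls_mem_gammaStar_two hconn hdiam hb)
      (fun h => hay (h ▸ hcy)) (fun h => hbx (h ▸ hcx))
  exact metricDim_add_four_le hconn (adj_of_cls_mem_gammaStar_one hx)
    (adj_of_cls_mem_gammaStar_one hy) (not_adj_of_cls_mem_gammaStar_two ha)
    (not_adj_of_cls_mem_gammaStar_two hb) (ne_of_cls_mem_gammaStar_two ha).symm
    (ne_of_cls_mem_gammaStar_two hb).symm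
    (fun h => not_twinRel_of_cls_mem_gammaStar_two hc (twinRel_symm h))
    hax hay hbx hby hcx hcy hcab

theorem gammaStar_two_card_le_two_general
    {V : Type*} [Fintype V] (G : SimpleGraph V)
    (hdiam : diamEq G 2)
    (hbeta : metricDim G = Fintype.card V - 3)
    (v : V)
    (hhom2 : Homogeneous G (Gamma G 2 v))
    (hR1 : (R1Star G v).ncard = 2) :
    (GammaStar G 2 v).ncard ≤ 2 := by
  obtain ⟨hconn, hdiam, -⟩ := hdiam
  obtain ⟨X, Y, -, hR⟩ := Set.ncard_eq_two.mp hR1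
  obtain ⟨x, rfl⟩ := exists_eq_cls X
  obtain ⟨y, rfl⟩ := exists_eq_cls Y
  have hx : cls G x ∈ R1Star G v := hR ▸ Set.mem_insert _ _
  have hy : cls G y ∈ R1Star G v := hR ▸ Set.mem_insert_of_mem _ rfl
  by_contra! hcard
  obtain ⟨⟨A, hA, hAx, hAy⟩, ⟨B, hB, hBx, hBy⟩, ⟨C, hC, hCx, hCy⟩⟩ :=
    exists_signatures_of_two_lt_ncard (P := ((twinGraph G).Adj · (cls G x)))
      (Q := ((twinGraph G).Adj · (cls G y)))
      (fun A hA => by simpa [hR] using exists_mem_R1Star_adj hA)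
      (fun A hA B hB hX hY => eq_of_forall_R1Star_adj_iff hconn hdiam hhom2 hA hB
        (by simpa [hR] using ⟨hX, hY⟩))
      hcard
  obtain ⟨a, rfl⟩ := exists_eq_cls A
  obtain ⟨b, rfl⟩ := exists_eq_cls B
  obtain ⟨c, rfl⟩ := exists_eq_cls C
  have := metricDim_add_four_le_of_gammaStar hconn hdiam hhom2 hx.1 hy.1 hA hB hC
    hAx hAy hBx hBy hCx hCy
  omega

/-- If `G` is connected of order `n`, `diam(G) = 2`, `β(G) = n - 3`, `v` is a
vertex with `Γ_2^*(v^*) ≠ ∅` and `Γ_1(v)` homogeneous, `Γ_2(v)` is homogeneous,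
and `|R_1^*(v^*)| = 2`, then `|Γ_2^*(v^*)| ≤ 2`. -/
theorem gammaStar_two_card_le_two
    {V : Type*} [Fintype V] (G : SimpleGraph V)
    (hdiam : diamEq G 2)
    (hbeta : metricDim G = Fintype.card V - 3)
    (v : V) (h2 : (GammaStar G 2 v).Nonempty)
    (hhom : Homogeneous G (Gamma G 1 v))
    (hhom2 : Homogeneous G (Gamma G 2 v))
    (hR1 : (R1Star G v).ncard = 2) :
    (GammaStar G 2 v).ncard ≤ 2 :=
  gammaStar_two_card_le_two_general G hdiam hbeta v hhom2 hR1

end PaperMetricDim
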